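/- Perron–Frobenius theorem, irreducible case (Theorem 7.1 of the paper). Let n ≥ 1 and let A be a real n × n matrix with all entries nonnegative which is irreducible, i.e., (I + A)^{n-1} has all entries strictly positive. Then there exists a vector v ∈ ℝⁿ with all entries strictly positive such that A v = r(A) v; any w ∈ ℂⁿ with A w = r(A) w is a scalar multiple of v; and r(A) is a simple eigenvalue of A, i.e., a simple root of the characteristic polynomial of A. -/

import Mathlib

/-- The spectral radius of a real square matrix: the supremum of `|μ|` over all
complex eigenvalues `μ` (roots of the characteristic polynomial over `ℂ`). -/
noncomputable def specRad (n : ℕ) (A : Matrix (Fin n) (Fin n) ℝ) : ℝ :=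
  sSup {t : ℝ | ∃ μ : ℂ,
    ((A.map (Complex.ofReal)).charpoly).IsRoot μ ∧ t = ‖μ‖}

/-
Maximizing the Collatz–Wielandt function `x ↦ minᵢ (A x)ᵢ / xᵢ` over the image of the standard
simplex under the positive matrix `(1 + A) ^ (n - 1)`, which commutes with `A`, produces a positive
eigenvector `v`, with eigenvalue `r`; applied to `Aᵀ` it gives a positive left eigenvector `u`,
and `u ⬝ v > 0` forces the same eigenvalue. Since `(1 + A) ^ (n - 1)` maps nonzero nonnegative
vectors to positive ones, a nonnegative eigenvector has no zero entry; subtracting from a real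
eigenvector the largest multiple of `v` below it therefore leaves zero, so the eigenspace is the
line through `v` (complex eigenvectors split into real and imaginary parts). Pairing
`‖μ‖ ‖w‖ ≤ A ‖w‖` with `u` bounds every eigenvalue by `r`, and `u` rules out Jordan chains, so `r`
is a simple root.
-/

open Matrix Finset Module

namespace Matrix

variable {ι : Type*} [Fintype ι]

section Field

variable {K : Type*} [Field K] {M : Matrix ι ι K} {μ : K}

theorem isRoot_charpoly_iff_exists_mulVec_eq_smul [DecidableEq ι] :
    M.charpoly.IsRoot μ ↔ ∃ w ≠ 0, M *ᵥ w = μ • w := by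
  simp only [← charpoly_toLin', ← End.hasEigenvalue_iff_isRoot_charpoly, End.hasEigenvalue_iff,
    Submodule.ne_bot_iff, End.mem_eigenspace_iff, toLin'_apply]
  tauto

/-- `u` annihilates the range of `M - μ` but not `v`, so `(M - μ) x ∈ K ∙ v` forces
`(M - μ) x = 0`: the generalized eigenspace is the line through `v`. -/
theorem rootMultiplicity_charpoly_eq_one [DecidableEq ι] {u v : ι → K} (hv : M *ᵥ v = μ • v)
    (hu : u ᵥ* M = μ • u) (huv : u ⬝ᵥ v ≠ 0)
    (huniq : ∀ w, M *ᵥ w = μ • w → ∃ c : K, w = c • v) :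
    M.charpoly.rootMultiplicity μ = 1 := by
  have hv0 : v ≠ 0 := by rintro rfl; simp at huv
  have hspan : End.maxGenEigenspace (toLin' M) μ = K ∙ v := by
    refine le_antisymm (fun x hx => ?_) ?_
    · obtain ⟨k, hk⟩ := (End.mem_maxGenEigenspace _ _ _).mp hx
      clear hx
      induction k generalizing x with
      | zero => simp_all
      | succ k ih =>
        rw [pow_succ, End.mul_apply] at hk
        obtain ⟨c, hc⟩ := Submodule.mem_span_singleton.mp (ih _ hk)
        have hdot : u ⬝ᵥ (toLin' M - μ • 1) x = 0 := by
          simp [dotProduct_sub, dotProduct_mulVec, hu]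
        obtain rfl : c = 0 := by
          simpa [← hc, dotProduct_smul, huv] using hdot
        obtain ⟨d, rfl⟩ := huniq x (by simpa [sub_eq_zero, eq_comm] using hc)
        exact Submodule.smul_mem _ _ (Submodule.mem_span_singleton_self v)
    · rw [Submodule.span_le, Set.singleton_subset_iff, SetLike.mem_coe]
      exact End.eigenspace_le_maxGenEigenspace <| End.mem_eigenspace_iff.mpr <| by
        rwa [toLin'_apply]
  rw [← charpoly_toLin', ← LinearMap.finrank_maxGenEigenspace_eq, hspan,
    finrank_span_singleton hv0]

end Field

section Real

variable {A B : Matrix ι ι ℝ} {k : ℕ} {r : ℝ} {v x y : ι → ℝ}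

theorem dotProduct_pos_of_pos {u : ι → ℝ} (hu : ∀ i, 0 < u i) (hx : ∀ i, 0 ≤ x i)
    (hx0 : x ≠ 0) : 0 < u ⬝ᵥ x := by
  obtain ⟨j, hj⟩ := Function.ne_iff.mp hx0
  exact Finset.sum_pos' (fun l _ => mul_nonneg (hu l).le (hx l))
    ⟨j, mem_univ j, mul_pos (hu j) ((hx j).lt_of_ne' hj)⟩

theorem mulVec_pos_of_pos (hB : ∀ i j, 0 < B i j) (hx : ∀ i, 0 ≤ x i) (hx0 : x ≠ 0) (i : ι) :
    0 < (B *ᵥ x) i :=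
  dotProduct_pos_of_pos (hB i) hx hx0

theorem one_add_pow_mulVec_of_mulVec_eq_smul [DecidableEq ι] {R : Type*} [CommRing R]
    {A : Matrix ι ι R} {r : R} {y : ι → R} (h : A *ᵥ y = r • y) (k : ℕ) :
    (1 + A) ^ k *ᵥ y = (1 + r) ^ k • y := by
  induction k with
  | zero => simp
  | succ k ih =>
    have h1 : (1 + A) *ᵥ y = (1 + r) • y := by rw [add_mulVec, one_mulVec, h, add_smul, one_smul]
    rw [pow_succ, ← mulVec_mulVec, h1, mulVec_smul, ih, smul_smul, pow_succ']

theorem pos_of_nonneg_of_mulVec_eq_smul [DecidableEq ι] (hirr : ∀ i j, 0 < ((1 + A) ^ k) i j)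
    (hy : ∀ i, 0 ≤ y i) (hy0 : y ≠ 0) (h : A *ᵥ y = r • y) (i : ι) : 0 < y i := by
  have hpos := mulVec_pos_of_pos hirr hy hy0 i
  rw [one_add_pow_mulVec_of_mulVec_eq_smul h, Pi.smul_apply, smul_eq_mul] at hpos
  exact (hy i).lt_of_ne fun h0 => by simp [← h0] at hpos

theorem nonneg_of_mulVec_eq_smul [Nonempty ι] (hA : ∀ i j, 0 ≤ A i j) (hv : ∀ i, 0 < v i)
    (h : A *ᵥ v = r • v) : 0 ≤ r := by
  obtain ⟨i⟩ := ‹Nonempty ι›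
  have : 0 ≤ (A *ᵥ v) i := Finset.sum_nonneg fun j _ => mul_nonneg (hA i j) (hv j).le
  rw [h, Pi.smul_apply, smul_eq_mul] at this
  exact nonneg_of_mul_nonneg_left this (hv i)

theorem ne_zero_of_mem_stdSimplex (hx : x ∈ stdSimplex ℝ ι) : x ≠ 0 := by
  rintro rfl
  simpa using hx.2

theorem inv_sum_smul_mem_stdSimplex [Nonempty ι] (hx : ∀ i, 0 < x i) :
    (∑ i, x i)⁻¹ • x ∈ stdSimplex ℝ ι := by
  have hsum : 0 < ∑ i, x i := Finset.sum_pos (fun i _ => hx i) univ_nonempty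
  refine ⟨fun i => smul_nonneg (inv_nonneg.mpr hsum.le) (hx i).le, ?_⟩
  simp only [Pi.smul_apply, smul_eq_mul, ← Finset.mul_sum, inv_mul_cancel₀ hsum.ne']

/-- Only meaningful for entrywise positive `x`. -/
noncomputable def collatzWielandt [Nonempty ι] (A : Matrix ι ι ℝ) (x : ι → ℝ) : ℝ :=
  univ.inf' univ_nonempty fun i => (A *ᵥ x) i / x i

section CollatzWielandt

variable [Nonempty ι] {s : ℝ}

theorem le_collatzWielandt_iff (hx : ∀ i, 0 < x i) :
    s ≤ collatzWielandt A x ↔ ∀ i, s * x i ≤ (A *ᵥ x) i := by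
  simp [collatzWielandt, le_div_iff₀ (hx _)]

theorem lt_collatzWielandt_iff (hx : ∀ i, 0 < x i) :
    s < collatzWielandt A x ↔ ∀ i, s * x i < (A *ᵥ x) i := by
  simp [collatzWielandt, lt_div_iff₀ (hx _)]

theorem collatzWielandt_smul {c : ℝ} (hc : 0 < c) :
    collatzWielandt A (c • x) = collatzWielandt A x := by
  simp only [collatzWielandt, mulVec_smul, Pi.smul_apply, smul_eq_mul,
    mul_div_mul_left _ _ hc.ne']

theorem continuousOn_collatzWielandt :
    ContinuousOn (collatzWielandt A) {x | ∀ i, 0 < x i} :=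
  ContinuousOn.finset_inf'_apply univ_nonempty fun i _ =>
    have hAx : Continuous fun x : ι → ℝ => (A *ᵥ x) i :=
      (continuous_apply i).comp (continuous_const.matrix_mulVec continuous_id)
    hAx.continuousOn.div (continuous_apply i).continuousOn fun _ hx => (hx i).ne'

/-- Smoothing by the positive matrix `(1 + A) ^ k`, which commutes with `A`, turns a
non-sharp subinvariance `r • v ≤ A *ᵥ v` into a strict one. -/
theorem lt_collatzWielandt_one_add_pow_mulVec [DecidableEq ι]
    (hirr : ∀ i j, 0 < ((1 + A) ^ k) i j) (hv : ∀ i, 0 < v i)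
    (hle : ∀ i, r * v i ≤ (A *ᵥ v) i) (hne : A *ᵥ v ≠ r • v) :
    r < collatzWielandt A ((1 + A) ^ k *ᵥ v) := by
  have hcomm : (1 + A) ^ k * A = A * (1 + A) ^ k :=
    ((Commute.one_left A).add_left (Commute.refl A)).pow_left k
  have hgap : ∀ i, 0 < ((1 + A) ^ k *ᵥ (A *ᵥ v - r • v)) i :=
    mulVec_pos_of_pos hirr (fun i => by simpa using hle i) (sub_ne_zero.mpr hne)
  rw [lt_collatzWielandt_iff (mulVec_pos_of_pos hirr (fun i => (hv i).le)
    (fun h => (hv (Classical.arbitrary ι)).ne' (congrFun h _)))]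
  intro i
  have := hgap i
  rw [mulVec_sub, mulVec_mulVec, hcomm, ← mulVec_mulVec, mulVec_smul] at this
  simpa [sub_pos] using this

end CollatzWielandt

theorem exists_pos_mulVec_eq_smul [DecidableEq ι] [Nonempty ι]
    (hirr : ∀ i j, 0 < ((1 + A) ^ k) i j) :
    ∃ (r : ℝ) (v : ι → ℝ), (∀ i, 0 < v i) ∧ A *ᵥ v = r • v := by
  have hpos : ∀ x ∈ stdSimplex ℝ ι, ∀ i, 0 < ((1 + A) ^ k *ᵥ x) i := fun x hx =>
    mulVec_pos_of_pos hirr hx.1 (ne_zero_of_mem_stdSimplex hx)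
  have hcont : ContinuousOn (fun x => collatzWielandt A ((1 + A) ^ k *ᵥ x)) (stdSimplex ℝ ι) :=
    continuousOn_collatzWielandt.comp (continuous_const.matrix_mulVec continuous_id).continuousOn
      hpos
  obtain ⟨x₀, hx₀, hmax⟩ := (isCompact_stdSimplex ℝ ι).exists_isMaxOn
    ⟨_, single_mem_stdSimplex ℝ (Classical.arbitrary ι)⟩ hcont
  set v := (1 + A) ^ k *ᵥ x₀
  have hv := hpos x₀ hx₀
  refine ⟨collatzWielandt A v, v, hv, ?_⟩
  by_contra hne
  have hlt := lt_collatzWielandt_one_add_pow_mulVec hirr hv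
    ((le_collatzWielandt_iff hv).mp le_rfl) hne
  have hle : collatzWielandt A ((1 + A) ^ k *ᵥ ((∑ i, v i)⁻¹ • v)) ≤ collatzWielandt A v :=
    hmax (inv_sum_smul_mem_stdSimplex hv)
  rw [mulVec_smul, collatzWielandt_smul
    (inv_pos.mpr (Finset.sum_pos (fun i _ => hv i) univ_nonempty))] at hle
  exact hle.not_gt hlt

theorem exists_eq_smul_of_mulVec_eq_smul [DecidableEq ι] [Nonempty ι]
    (hirr : ∀ i j, 0 < ((1 + A) ^ k) i j) (hv : ∀ i, 0 < v i) (hAv : A *ᵥ v = r • v)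
    (hy : A *ᵥ y = r • y) : ∃ c : ℝ, y = c • v := by
  obtain ⟨i₀, hi₀⟩ := Finite.exists_min fun i => y i / v i
  refine ⟨y i₀ / v i₀, ?_⟩
  by_contra hne
  have hz : ∀ i, 0 ≤ (y - (y i₀ / v i₀) • v) i := fun i => by
    simpa [sub_nonneg] using (le_div_iff₀ (hv i)).mp (hi₀ i)
  have hAz : A *ᵥ (y - (y i₀ / v i₀) • v) = r • (y - (y i₀ / v i₀) • v) := by
    rw [mulVec_sub, mulVec_smul, hy, hAv, smul_sub, smul_comm]
  have := pos_of_nonneg_of_mulVec_eq_smul hirr hz (sub_ne_zero.mpr hne) hAz i₀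
  simp [div_mul_cancel₀ _ (hv i₀).ne'] at this

theorem re_map_ofReal_mulVec (A : Matrix ι ι ℝ) (w : ι → ℂ) (i : ι) :
    ((A.map Complex.ofReal *ᵥ w) i).re = (A *ᵥ fun j => (w j).re) i := by
  simp [mulVec, dotProduct]

theorem im_map_ofReal_mulVec (A : Matrix ι ι ℝ) (w : ι → ℂ) (i : ι) :
    ((A.map Complex.ofReal *ᵥ w) i).im = (A *ᵥ fun j => (w j).im) i := by
  simp [mulVec, dotProduct]

theorem exists_eq_smul_of_map_ofReal_mulVec_eq_smul [DecidableEq ι] [Nonempty ι]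
    (hirr : ∀ i j, 0 < ((1 + A) ^ k) i j) (hv : ∀ i, 0 < v i) (hAv : A *ᵥ v = r • v)
    {w : ι → ℂ} (hw : A.map Complex.ofReal *ᵥ w = (r : ℂ) • w) :
    ∃ c : ℂ, w = c • fun i => (v i : ℂ) := by
  obtain ⟨a, ha⟩ := exists_eq_smul_of_mulVec_eq_smul (y := fun i => (w i).re) hirr hv hAv <| by
    ext i; simp [← re_map_ofReal_mulVec, hw]
  obtain ⟨b, hb⟩ := exists_eq_smul_of_mulVec_eq_smul (y := fun i => (w i).im) hirr hv hAv <| by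
    ext i; simp [← im_map_ofReal_mulVec, hw]
  refine ⟨⟨a, b⟩, funext fun i => Complex.ext ?_ ?_⟩
  · simpa using congrFun ha i
  · simpa using congrFun hb i

theorem exists_pos_vecMul_eq_smul [DecidableEq ι] [Nonempty ι]
    (hirr : ∀ i j, 0 < ((1 + A) ^ k) i j) (hv : ∀ i, 0 < v i) (hAv : A *ᵥ v = r • v) :
    ∃ u : ι → ℝ, (∀ i, 0 < u i) ∧ u ᵥ* A = r • u := by
  have hirrT : ∀ i j, 0 < ((1 + Aᵀ) ^ k) i j := fun i j => by
    rw [← transpose_one, ← transpose_add, ← transpose_pow]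
    exact hirr j i
  obtain ⟨s, u, hu, huA⟩ := exists_pos_mulVec_eq_smul hirrT
  rw [mulVec_transpose] at huA
  have huv : 0 < u ⬝ᵥ v := Finset.sum_pos (fun i _ => mul_pos (hu i) (hv i)) univ_nonempty
  have hsr : s * (u ⬝ᵥ v) = r * (u ⬝ᵥ v) := by
    rw [← smul_eq_mul, ← smul_dotProduct, ← huA, ← dotProduct_mulVec, hAv, dotProduct_smul,
      smul_eq_mul]
  obtain rfl := mul_right_cancel₀ huv.ne' hsr
  exact ⟨u, hu, huA⟩

theorem le_of_smul_le_mulVec {u : ι → ℝ} {s : ℝ} (hu : ∀ i, 0 < u i) (huA : u ᵥ* A = r • u)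
    (hy : ∀ i, 0 ≤ y i) (hy0 : y ≠ 0) (hle : ∀ i, s * y i ≤ (A *ᵥ y) i) : s ≤ r := by
  have huy := dotProduct_pos_of_pos hu hy hy0
  refine le_of_mul_le_mul_right ?_ huy
  calc s * (u ⬝ᵥ y) = u ⬝ᵥ (s • y) := by rw [dotProduct_smul, smul_eq_mul]
    _ ≤ u ⬝ᵥ (A *ᵥ y) := Finset.sum_le_sum fun i _ => mul_le_mul_of_nonneg_left (hle i) (hu i).le
    _ = r * (u ⬝ᵥ y) := by rw [dotProduct_mulVec, huA, smul_dotProduct, smul_eq_mul]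

theorem norm_map_ofReal_mulVec_le (hA : ∀ i j, 0 ≤ A i j) (w : ι → ℂ) (i : ι) :
    ‖(A.map Complex.ofReal *ᵥ w) i‖ ≤ (A *ᵥ fun j => ‖w j‖) i :=
  (norm_sum_le _ _).trans_eq <| Finset.sum_congr rfl fun j _ => by
    simp [abs_of_nonneg (hA i j)]

theorem norm_le_of_isRoot_charpoly [DecidableEq ι] {u : ι → ℝ} (hA : ∀ i j, 0 ≤ A i j)
    (hu : ∀ i, 0 < u i) (huA : u ᵥ* A = r • u) {μ : ℂ}
    (hμ : (A.map Complex.ofReal).charpoly.IsRoot μ) : ‖μ‖ ≤ r := by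
  obtain ⟨w, hw0, hw⟩ := isRoot_charpoly_iff_exists_mulVec_eq_smul.mp hμ
  refine le_of_smul_le_mulVec hu huA (fun i => norm_nonneg (w i)) ?_ fun i => ?_
  · exact fun h => hw0 (funext fun i => norm_eq_zero.mp (congrFun h i))
  · simpa [hw] using norm_map_ofReal_mulVec_le hA w i

theorem map_ofReal_mulVec_coe_eq_smul (h : A *ᵥ v = r • v) :
    A.map Complex.ofReal *ᵥ (fun i => (v i : ℂ)) = (r : ℂ) • fun i => (v i : ℂ) := by
  ext i
  exact (RingHom.map_mulVec Complex.ofRealHom A v i).symm.trans (by simp [h])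

theorem coe_vecMul_map_ofReal_eq_smul {u : ι → ℝ} (h : u ᵥ* A = r • u) :
    (fun i => (u i : ℂ)) ᵥ* A.map Complex.ofReal = (r : ℂ) • fun i => (u i : ℂ) := by
  ext i
  exact (RingHom.map_vecMul Complex.ofRealHom A u i).symm.trans (by simp [h])

end Real
end Matrix

theorem specRad_eq_of_isRoot_of_forall_norm_le {n : ℕ} {A : Matrix (Fin n) (Fin n) ℝ} {r : ℝ}
    (hr : 0 ≤ r) (hroot : (A.map Complex.ofReal).charpoly.IsRoot (r : ℂ))
    (hle : ∀ μ : ℂ, (A.map Complex.ofReal).charpoly.IsRoot μ → ‖μ‖ ≤ r) : specRad n A = r := by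
  refine IsGreatest.csSup_eq ⟨⟨r, hroot, by rw [Complex.norm_real, Real.norm_of_nonneg hr]⟩, ?_⟩
  rintro t ⟨μ, hμ, rfl⟩
  exact hle μ hμ

/-- **Perron–Frobenius theorem (irreducible case).** If `A` is an entrywise
nonnegative real `n × n` matrix (`n ≥ 1`) which is irreducible, i.e.
`(I + A)^(n-1)` has all entries strictly positive, then there is an entrywise
strictly positive eigenvector `v` with eigenvalue the spectral radius `r(A)`;
every complex eigenvector of eigenvalue `r(A)` is a scalar multiple of `v`; and
`r(A)` is a simple root of the characteristic polynomial. -/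
theorem perron_frobenius_irreducible (n : ℕ) (hn : 1 ≤ n)
    (A : Matrix (Fin n) (Fin n) ℝ) (hA : ∀ i j, 0 ≤ A i j)
    (hirr : ∀ i j, 0 < ((1 + A) ^ (n - 1)) i j) :
    ∃ v : Fin n → ℝ, (∀ i, 0 < v i) ∧ A.mulVec v = specRad n A • v ∧
      (∀ w : Fin n → ℂ, (A.map (Complex.ofReal)).mulVec w = (specRad n A : ℂ) • w →
        ∃ c : ℂ, w = c • fun i => (v i : ℂ)) ∧
      ((A.map (Complex.ofReal)).charpoly).rootMultiplicity ((specRad n A : ℂ)) = 1 := by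
  have : Nonempty (Fin n) := ⟨⟨0, hn⟩⟩
  obtain ⟨r, v, hv, hAv⟩ := exists_pos_mulVec_eq_smul hirr
  obtain ⟨u, hu, huA⟩ := exists_pos_vecMul_eq_smul hirr hv hAv
  have hvc := map_ofReal_mulVec_coe_eq_smul hAv
  have huv : (fun i => (u i : ℂ)) ⬝ᵥ (fun i => (v i : ℂ)) ≠ 0 :=
    (RingHom.map_dotProduct Complex.ofRealHom u v).symm.trans_ne <| (_root_.map_ne_zero _).mpr
      (Finset.sum_pos (fun i _ => mul_pos (hu i) (hv i)) univ_nonempty).ne'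
  have hroot : (A.map Complex.ofReal).charpoly.IsRoot (r : ℂ) :=
    isRoot_charpoly_iff_exists_mulVec_eq_smul.mpr
      ⟨_, fun h => huv (by rw [h, dotProduct_zero]), hvc⟩
  obtain rfl : specRad n A = r := specRad_eq_of_isRoot_of_forall_norm_le
    (nonneg_of_mulVec_eq_smul hA hv hAv) hroot fun μ hμ => norm_le_of_isRoot_charpoly hA hu huA hμ
  have huniq := fun w (hw : A.map Complex.ofReal *ᵥ w = _) =>
    exists_eq_smul_of_map_ofReal_mulVec_eq_smul hirr hv hAv hw
  exact ⟨v, hv, hAv, huniq, rootMultiplicity_charpoly_eq_one hvc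
    (coe_vecMul_map_ofReal_eq_smul huA) huv huniq⟩
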